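/- Let A ∈ ℝ^{n×n} and C ∈ ℝ^{m×n}, assume the pair (A,C) is observable, and set R = Cᵀ C. If there exists a symmetric nonnegative definite matrix Q ∈ ℝ^{n×n} satisfying Aᵀ Q + Q A = −R, then the matrix A is stable, i.e., every eigenvalue of A has negative real part (equivalently, e^{tA} x0 → 0 as t → +∞ for every x0 ∈ ℝ^n). -/

import Mathlib

open Matrix NormedSpace

/-- The pair `(A,C)` is observable: for every `x0 ≠ 0` there exists `τ > 0` with
`C e^{τA} x0 ≠ 0`. -/
def IsObservable {n m : ℕ} (A : Matrix (Fin n) (Fin n) ℝ)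
    (C : Matrix (Fin m) (Fin n) ℝ) : Prop :=
  ∀ x0 : Fin n → ℝ, x0 ≠ 0 → ∃ τ : ℝ, 0 < τ ∧ C.mulVec ((exp (τ • A)).mulVec x0) ≠ 0

section Aux

attribute [local instance] Matrix.linftyOpNormedRing Matrix.linftyOpNormedAlgebra

variable {n m : ℕ}

private lemma map_mulVec_real (M : Matrix (Fin m) (Fin n) ℝ) (x : Fin n → ℝ) :
    (M.map Complex.ofReal) *ᵥ (fun i => (x i : ℂ)) = fun i => ((M *ᵥ x) i : ℂ) := by
  ext i
  simp [Matrix.mulVec, dotProduct, Matrix.map_apply]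

private lemma map_mulVec_star (M : Matrix (Fin m) (Fin n) ℝ) (v : Fin n → ℂ) :
    (M.map Complex.ofReal) *ᵥ (star v) = star ((M.map Complex.ofReal) *ᵥ v) := by
  ext i
  simp [Matrix.mulVec, dotProduct, Matrix.map_apply, star_sum, Pi.star_apply,
    Complex.star_def, _root_.map_mul, Complex.conj_ofReal]

private lemma re_dot_star_self_nonneg (w : Fin m → ℂ) : 0 ≤ (star w ⬝ᵥ w).re := by
  simp only [dotProduct, Pi.star_apply, Complex.re_sum]
  apply Finset.sum_nonneg
  intro i _
  simpa [← Complex.normSq_eq_conj_mul_self] using Complex.normSq_nonneg (w i)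

private lemma eq_zero_of_re_dot_star_self (w : Fin m → ℂ) (h : (star w ⬝ᵥ w).re = 0) :
    w = 0 := by
  have h' : ∑ i, Complex.normSq (w i) = 0 := by
    simpa [dotProduct, Complex.re_sum, ← Complex.normSq_eq_conj_mul_self] using h
  have := (Finset.sum_eq_zero_iff_of_nonneg (fun i _ => Complex.normSq_nonneg (w i))).mp h'
  funext i
  exact Complex.normSq_eq_zero.mp (this i (Finset.mem_univ i))

private lemma pow_mulVec_eigen {M : Matrix (Fin n) (Fin n) ℂ} {z : ℂ} {v : Fin n → ℂ}
    (h : M *ᵥ v = z • v) : ∀ k : ℕ, (M ^ k) *ᵥ v = z ^ k • v := by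
  intro k
  induction k with
  | zero => simp
  | succ k ih =>
    rw [pow_succ, ← Matrix.mulVec_mulVec, h, Matrix.mulVec_smul, ih, smul_smul, pow_succ,
      mul_comm]

private lemma exp_mulVec_eigen {M : Matrix (Fin n) (Fin n) ℂ} {z : ℂ} {v : Fin n → ℂ}
    (h : M *ᵥ v = z • v) : (exp M) *ᵥ v = Complex.exp z • v := by
  let L : Matrix (Fin n) (Fin n) ℂ →ₗ[ℂ] (Fin n → ℂ) :=
    { toFun := fun N => N *ᵥ v
      map_add' := fun a b => Matrix.add_mulVec a b v
      map_smul' := fun c N => Matrix.smul_mulVec c N v }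
  let L' : Matrix (Fin n) (Fin n) ℂ →L[ℂ] (Fin n → ℂ) := LinearMap.toContinuousLinearMap L
  have hs : Summable (fun k : ℕ => ((Nat.factorial k : ℂ))⁻¹ • M ^ k) := expSeries_summable' M
  have key : (exp M) *ᵥ v = L' (∑' k : ℕ, ((Nat.factorial k : ℂ))⁻¹ • M ^ k) := by
    rw [exp_eq_tsum (𝕂 := ℂ)]
    rfl
  rw [key, L'.map_tsum hs]
  have : ∀ k : ℕ, L' (((Nat.factorial k : ℂ))⁻¹ • M ^ k) =
      (((Nat.factorial k : ℂ))⁻¹ * z ^ k) • v := by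
    intro k
    have hL : ∀ N : Matrix (Fin n) (Fin n) ℂ, L' N = N *ᵥ v := fun N => rfl
    rw [hL, Matrix.smul_mulVec, pow_mulVec_eigen h k, smul_smul]
  rw [tsum_congr this, Summable.tsum_smul_const]
  · congr 1
    have := congrFun (exp_eq_tsum (𝕂 := ℂ) (𝔸 := ℂ)) z
    rw [Complex.exp_eq_exp_ℂ, this]
    simp [smul_eq_mul]
  · simpa [smul_eq_mul] using expSeries_summable' (𝕂 := ℂ) z

private lemma ofReal_add_I_mul_eq_zero {x y : ℝ} (h : (x : ℂ) + Complex.I * (y : ℂ) = 0) :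
    x = 0 ∧ y = 0 := by
  have h1 := congrArg Complex.re h
  have h2 := congrArg Complex.im h
  simp at h1 h2
  exact ⟨h1, h2⟩

private lemma map_ofReal_mul {p q r : ℕ} (M : Matrix (Fin p) (Fin q) ℝ)
    (N : Matrix (Fin q) (Fin r) ℝ) :
    (M * N).map Complex.ofReal = M.map Complex.ofReal * N.map Complex.ofReal := by
  ext i j
  simp [Matrix.mul_apply, Matrix.map_apply]

private lemma exp_map_ofReal (M : Matrix (Fin n) (Fin n) ℝ) :
    (exp M).map Complex.ofReal = exp (M.map Complex.ofReal) := by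
  have hcont : Continuous ((algebraMap ℝ ℂ).mapMatrix :
      Matrix (Fin n) (Fin n) ℝ →+* Matrix (Fin n) (Fin n) ℂ) := by
    show Continuous fun M : Matrix (Fin n) (Fin n) ℝ => M.map (algebraMap ℝ ℂ)
    exact Continuous.matrix_map continuous_id (continuous_algebraMap ℝ ℂ)
  have h1 := map_exp ((algebraMap ℝ ℂ).mapMatrix (m := Fin n)) hcont M
  have h2 : (exp : Matrix (Fin n) (Fin n) ℂ → _) = exp := rfl
  simp only [RingHom.mapMatrix_apply] at h1
  have h3 : (algebraMap ℝ ℂ : ℝ → ℂ) = Complex.ofReal := rfl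
  rw [← h3]
  exact h1

end Aux

/-- If `(A,C)` is observable and a symmetric nonnegative definite `Q`
satisfies `AᵀQ + QA = −CᵀC`, then `A` is stable: every (complex) eigenvalue of `A`
has negative real part. -/
theorem statement_11 (n m : ℕ) (A : Matrix (Fin n) (Fin n) ℝ)
    (C : Matrix (Fin m) (Fin n) ℝ) (Q : Matrix (Fin n) (Fin n) ℝ)
    (hobs : IsObservable A C) (hQ : Q.PosSemidef)
    (hLyap : Aᵀ * Q + Q * A = -(Cᵀ * C)) :
    ∀ z : ℂ, (z • (1 : Matrix (Fin n) (Fin n) ℂ) - A.map Complex.ofReal).det = 0 →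
      z.re < 0 := by
  intro z hz
  by_contra hre
  push_neg at hre
  set A' : Matrix (Fin n) (Fin n) ℂ := A.map Complex.ofReal with hA'
  set Q' : Matrix (Fin n) (Fin n) ℂ := Q.map Complex.ofReal with hQ'
  set C' : Matrix (Fin m) (Fin n) ℂ := C.map Complex.ofReal with hC'
  -- get an eigenvector
  obtain ⟨v, hv0, hv⟩ := (Matrix.exists_mulVec_eq_zero_iff).mpr hz
  have heig : A' *ᵥ v = z • v := by
    have := hv
    rw [Matrix.sub_mulVec, Matrix.smul_mulVec, Matrix.one_mulVec, sub_eq_zero] at this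
    exact this.symm
  -- complexified Lyapunov equation
  have hLyapC : A'ᵀ * Q' + Q' * A' = -(C'ᵀ * C') := by
    have h0 := congrArg (fun M : Matrix (Fin n) (Fin n) ℝ => M.map Complex.ofReal) hLyap
    have hofReal : ∀ (p q : ℕ) (M N : Matrix (Fin p) (Fin q) ℝ),
        (M + N).map Complex.ofReal = M.map Complex.ofReal + N.map Complex.ofReal := by
      intro p q M N; ext i j; simp
    have hneg : ∀ (p q : ℕ) (M : Matrix (Fin p) (Fin q) ℝ),
        (-M).map Complex.ofReal = -(M.map Complex.ofReal) := by
      intro p q M; ext i j; simp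
    simp only [hofReal, hneg, map_ofReal_mul, Matrix.transpose_map] at h0
    exact h0
  -- the key scalar identity
  set w : Fin m → ℂ := C' *ᵥ v with hw_def
  set q : ℂ := star v ⬝ᵥ (Q' *ᵥ v) with hq_def
  have hdot1 : star v ⬝ᵥ ((A'ᵀ * Q' + Q' * A') *ᵥ v) = (starRingEnd ℂ z + z) * q := by
    rw [Matrix.add_mulVec, dotProduct_add]
    have hterm1 : star v ⬝ᵥ ((A'ᵀ * Q') *ᵥ v) = starRingEnd ℂ z * q := by
      rw [← Matrix.mulVec_mulVec, Matrix.dotProduct_mulVec, Matrix.vecMul_transpose,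
        map_mulVec_star, heig]
      have : star (z • v) = starRingEnd ℂ z • star v := by
        ext i; simp [Complex.star_def]
      rw [this, smul_dotProduct, smul_eq_mul]
    have hterm2 : star v ⬝ᵥ ((Q' * A') *ᵥ v) = z * q := by
      rw [← Matrix.mulVec_mulVec, heig, Matrix.mulVec_smul, dotProduct_smul,
        smul_eq_mul, hq_def]
    rw [hterm1, hterm2, add_mul]
  have hdot2 : star v ⬝ᵥ ((-(C'ᵀ * C')) *ᵥ v) = -(star w ⬝ᵥ w) := by
    rw [Matrix.neg_mulVec, dotProduct_neg, ← Matrix.mulVec_mulVec,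
      Matrix.dotProduct_mulVec, Matrix.vecMul_transpose, map_mulVec_star]
  have hkey : (starRingEnd ℂ z + z) * q = -(star w ⬝ᵥ w) := by
    rw [← hdot1, hLyapC, hdot2]
  -- q has nonnegative real part
  have hqre : 0 ≤ q.re := by
    obtain ⟨B, hB⟩ : ∃ B : Matrix (Fin n) (Fin n) ℝ, Q = Bᴴ * B := by
      open scoped MatrixOrder in
      refine ⟨CFC.sqrt Q, ?_⟩
      open scoped MatrixOrder in
      rw [((nonneg_iff_posSemidef.mp (CFC.sqrt_nonneg Q)).1 : _ = _),
        CFC.sqrt_mul_sqrt_self Q (nonneg_iff_posSemidef.mpr hQ)]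
    have hBT : Bᴴ = Bᵀ := by
      ext i j; simp [Matrix.conjTranspose_apply]
    rw [hBT] at hB
    have hQmap : Q' = (B.map Complex.ofReal)ᵀ * (B.map Complex.ofReal) := by
      rw [hQ', hB, map_ofReal_mul, Matrix.transpose_map]
    have : q = star ((B.map Complex.ofReal) *ᵥ v) ⬝ᵥ ((B.map Complex.ofReal) *ᵥ v) := by
      rw [hq_def, hQmap, ← Matrix.mulVec_mulVec, Matrix.dotProduct_mulVec,
        Matrix.vecMul_transpose, map_mulVec_star]
    rw [this]
    exact re_dot_star_self_nonneg _
  -- conclude w = 0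
  have hconj : starRingEnd ℂ z + z = ((2 * z.re : ℝ) : ℂ) := by
    rw [add_comm]
    exact Complex.add_conj z
  have hre_eq : 2 * z.re * q.re = -((star w ⬝ᵥ w).re) := by
    have := congrArg Complex.re hkey
    rw [hconj] at this
    simpa [Complex.mul_re] using this
  have hw_zero : w = 0 := by
    apply eq_zero_of_re_dot_star_self
    have h1 : 0 ≤ 2 * z.re * q.re := mul_nonneg (by linarith) hqre
    have h2 := re_dot_star_self_nonneg w
    linarith [hre_eq]
  -- real and imaginary parts of v
  set a : Fin n → ℝ := fun i => (v i).re with ha_def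
  set b : Fin n → ℝ := fun i => (v i).im with hb_def
  have hv_decomp : v = (fun i => (a i : ℂ)) + Complex.I • (fun i => (b i : ℂ)) := by
    funext i
    simp only [Pi.add_apply, Pi.smul_apply, smul_eq_mul, ha_def, hb_def]
    rw [mul_comm]
    exact (Complex.re_add_im (v i)).symm
  -- for every τ, C e^{τA} kills both a and b
  have hC0 : ∀ τ : ℝ, C *ᵥ ((exp (τ • A)) *ᵥ a) = 0 ∧ C *ᵥ ((exp (τ • A)) *ᵥ b) = 0 := by
    intro τ
    have hmap : (τ • A).map Complex.ofReal = (τ : ℂ) • A' := by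
      ext i j; simp [hA', Matrix.map_apply]
    have heig2 : ((τ : ℂ) • A') *ᵥ v = ((τ : ℂ) * z) • v := by
      rw [Matrix.smul_mulVec, heig, smul_smul]
    have hCE : C' *ᵥ ((exp (τ • A)).map Complex.ofReal *ᵥ v) = 0 := by
      rw [exp_map_ofReal, hmap, exp_mulVec_eigen heig2, Matrix.mulVec_smul,
        ← hw_def, hw_zero, smul_zero]
    set E := exp (τ • A) with hE
    have hsplit : (E.map Complex.ofReal) *ᵥ v =
        (fun i => (((E *ᵥ a) i : ℝ) : ℂ)) + Complex.I • (fun i => (((E *ᵥ b) i : ℝ) : ℂ)) := by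
      rw [hv_decomp, Matrix.mulVec_add, Matrix.mulVec_smul, map_mulVec_real, map_mulVec_real]
    have hsplit2 : C' *ᵥ ((E.map Complex.ofReal) *ᵥ v) =
        (fun i => (((C *ᵥ (E *ᵥ a)) i : ℝ) : ℂ)) +
          Complex.I • (fun i => (((C *ᵥ (E *ᵥ b)) i : ℝ) : ℂ)) := by
      rw [hsplit, Matrix.mulVec_add, Matrix.mulVec_smul, map_mulVec_real, map_mulVec_real]
    rw [hsplit2] at hCE
    have hsol : ∀ i, (C *ᵥ (E *ᵥ a)) i = 0 ∧ (C *ᵥ (E *ᵥ b)) i = 0 := by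
      intro i
      have := congrFun hCE i
      simp only [Pi.add_apply, Pi.smul_apply, smul_eq_mul, Pi.zero_apply] at this
      exact ofReal_add_I_mul_eq_zero this
    exact ⟨funext fun i => (hsol i).1, funext fun i => (hsol i).2⟩
  -- observability forces a = b = 0
  have ha0 : a = 0 := by
    by_contra h
    obtain ⟨τ, _, hne⟩ := hobs a h
    exact hne ((hC0 τ).1)
  have hb0 : b = 0 := by
    by_contra h
    obtain ⟨τ, _, hne⟩ := hobs b h
    exact hne ((hC0 τ).2)
  apply hv0
  rw [hv_decomp, ha0, hb0]
  funext i
  simp
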